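/- arXiv:1403.7393 — 3 statements merged into one kernel-verified Lean document; each statement's English description precedes it below -/
import Mathlib

section
/- The function √(2/π) · exp(-t - (1/2)exp(-2t)) integrates to 1 over ℝ (it is a probability density). -/
open MeasureTheory Set Real

/-- The function `t ↦ √(2/π)·exp(-t - (1/2)exp(-2t))` is a probability density:
it integrates to `1` over `ℝ`. -/
theorem neg_log_abs_gaussian_density_integral :
    ∫ t : ℝ, Real.sqrt (2 / Real.pi) * Real.exp (-t - (1 / 2) * Real.exp (-2 * t)) = 1 := by
  have hderiv : ∀ x ∈ (Set.univ : Set ℝ),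
      HasDerivWithinAt (fun t : ℝ => Real.exp (-t)) (-Real.exp (-x)) Set.univ x := by
    intro x _
    have h : HasDerivAt (fun t : ℝ => Real.exp (-t)) (-Real.exp (-x)) x := by
      simpa [Function.comp_def, mul_comm] using
        (Real.hasDerivAt_exp (-x)).comp x (hasDerivAt_neg x)
    exact h.hasDerivWithinAt
  have hinj : Set.InjOn (fun t : ℝ => Real.exp (-t)) Set.univ := by
    intro a _ b _ hab
    have := Real.exp_injective hab
    linarith [neg_injective this]
  have himg : (fun t : ℝ => Real.exp (-t)) '' Set.univ = Set.Ioi (0 : ℝ) := by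
    rw [Set.image_univ]
    ext y
    simp only [Set.mem_range, Set.mem_Ioi]
    constructor
    · rintro ⟨t, rfl⟩; exact Real.exp_pos _
    · intro hy; exact ⟨-Real.log y, by simp [Real.exp_log hy]⟩
  have key := MeasureTheory.integral_image_eq_integral_abs_deriv_smul
    MeasurableSet.univ hderiv hinj
    (fun u => Real.sqrt (2 / Real.pi) * Real.exp (-(1 / 2) * u ^ 2))
  rw [himg] at key
  have hRHS : ∫ x : ℝ, |(-Real.exp (-x))| •
      (Real.sqrt (2 / Real.pi) * Real.exp (-(1 / 2) * Real.exp (-x) ^ 2))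
      = ∫ t : ℝ, Real.sqrt (2 / Real.pi) * Real.exp (-t - 1 / 2 * Real.exp (-2 * t)) := by
    congr 1
    ext t
    have h2 : Real.exp (-t) ^ 2 = Real.exp (-2 * t) := by
      rw [sq, ← Real.exp_add]; ring_nf
    rw [abs_neg, abs_of_pos (Real.exp_pos _), smul_eq_mul, h2, mul_left_comm, ← Real.exp_add]
    ring_nf
  rw [MeasureTheory.setIntegral_univ, hRHS] at key
  rw [← key, MeasureTheory.integral_const_mul, integral_gaussian_Ioi]
  rw [show Real.pi / (1 / 2) = 2 * Real.pi by ring, ← mul_div_assoc,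
    ← Real.sqrt_mul (by positivity),
    show 2 / Real.pi * (2 * Real.pi) = 4 by field_simp; ring,
    show (4 : ℝ) = 2 ^ 2 by norm_num, Real.sqrt_sq (by norm_num)]
  norm_num
end

section
/- Let Z be a standard Gumbel random variable and Θ = -log|N| with N standard normal, Z and Θ independent. Then Z/2 + Θ has the same distribution as Z + (log 2)/2. -/
/-!
Conditionally on `N = n`, the event `Z / 2 - log |N| ≤ x` is `Z ≤ 2 (x + log |n|)`, of probability
`exp (-a ^ 2 / (2 n ^ 2))` with `a = √2 e^{-x}`. Averaging over `n`, completing the square gives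
`E[exp (-a ^ 2 / (2 N ^ 2))] = e^{-a} ∫ φ (t - a / t) dt` for the Gaussian density `φ`, and the
substitution `u = t - a / t` (Glasser's master theorem) shows that the last integral is `1`.
Hence `P(Z / 2 + Θ ≤ x) = exp (-√2 e^{-x}) = P(Z + log 2 / 2 ≤ x)`.
-/

open Real Set MeasureTheory ProbabilityTheory

/-- The positive root of `t ^ 2 - u * t - a`, i.e. the inverse of `t ↦ t - a / t` on `(0, ∞)`. -/
noncomputable def subDivInv (a u : ℝ) : ℝ := (u + √(u ^ 2 + 4 * a)) / 2

section

variable {a : ℝ}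

lemma subDivInv_pos (ha : 0 < a) (u : ℝ) : 0 < subDivInv a u := by
  have hu : |u| < √(u ^ 2 + 4 * a) := (lt_sqrt (abs_nonneg u)).2 (by rw [sq_abs]; linarith)
  unfold subDivInv
  linarith [neg_abs_le u]

lemma subDivInv_sub_div (ha : 0 < a) (u : ℝ) : subDivInv a u - a / subDivInv a u = u := by
  have hψ := (subDivInv_pos ha u).ne'
  have hs := sq_sqrt (by positivity : 0 ≤ u ^ 2 + 4 * a)
  have key : subDivInv a u * (subDivInv a u - u) = a := by
    unfold subDivInv
    linear_combination (1 / 4 : ℝ) * hs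
  have hdiv : a / subDivInv a u = subDivInv a u - u := by
    rw [div_eq_iff hψ]
    linear_combination -key
  rw [hdiv]
  ring

lemma subDivInv_sub_div_of_pos (ha : 0 < a) {t : ℝ} (ht : 0 < t) :
    subDivInv a (t - a / t) = t := by
  have hsq : (t - a / t) ^ 2 + 4 * a = (t + a / t) ^ 2 := by field_simp; ring
  unfold subDivInv
  rw [hsq, sqrt_sq (by positivity)]
  ring

lemma image_subDivInv (ha : 0 < a) : subDivInv a '' univ = Ioi 0 := by
  refine Subset.antisymm ?_ fun t ht => ⟨t - a / t, trivial, subDivInv_sub_div_of_pos ha ht⟩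
  rintro _ ⟨u, -, rfl⟩
  exact subDivInv_pos ha u

lemma hasDerivAt_subDivInv (ha : 0 < a) (u : ℝ) :
    HasDerivAt (subDivInv a) (subDivInv a u / √(u ^ 2 + 4 * a)) u := by
  have hs : 0 < √(u ^ 2 + 4 * a) := by positivity
  have hsqrt : HasDerivAt (fun u => √(u ^ 2 + 4 * a)) (u / √(u ^ 2 + 4 * a)) u := by
    convert ((hasDerivAt_pow 2 u).add_const (4 * a)).sqrt (by positivity) using 1
    field_simp
    ring
  refine (((hasDerivAt_id u).add hsqrt).div_const 2).congr_deriv ?_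
  unfold subDivInv
  field_simp
  ring

lemma subDivInv_div_add_neg (ha : 0 < a) (u : ℝ) :
    subDivInv a u / √(u ^ 2 + 4 * a) + subDivInv a (-u) / √((-u) ^ 2 + 4 * a) = 1 := by
  have hs : 0 < √(u ^ 2 + 4 * a) := by positivity
  unfold subDivInv
  rw [neg_sq]
  field_simp
  ring

lemma setIntegral_Ioi_comp_sub_div (ha : 0 < a) (F : ℝ → ℝ) :
    ∫ t in Ioi 0, F (t - a / t) = ∫ u, subDivInv a u / √(u ^ 2 + 4 * a) * F u := by
  have hinj : Function.Injective (subDivInv a) :=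
    Function.LeftInverse.injective (g := fun t => t - a / t) (subDivInv_sub_div ha)
  rw [← image_subDivInv ha, integral_image_eq_integral_abs_deriv_smul MeasurableSet.univ
    (fun u _ => (hasDerivAt_subDivInv ha u).hasDerivWithinAt) hinj.injOn, setIntegral_univ]
  congr 1 with u
  have hs : 0 < √(u ^ 2 + 4 * a) := by positivity
  rw [subDivInv_sub_div ha, abs_of_pos (div_pos (subDivInv_pos ha u) hs), smul_eq_mul]

-- A case of Glasser's master theorem.
theorem integral_comp_sub_div_of_even (ha : 0 < a) {F : ℝ → ℝ} (hF : ∀ u, F (-u) = F u)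
    (hFi : Integrable F) : ∫ t, F (t - a / t) = ∫ u, F u := by
  set w : ℝ → ℝ := fun u => subDivInv a u / √(u ^ 2 + 4 * a)
  have hw_sum (u : ℝ) : w u + w (-u) = 1 := subDivInv_div_add_neg ha u
  have hw_nonneg (u : ℝ) : 0 ≤ w u := div_nonneg (subDivInv_pos ha u).le (sqrt_nonneg _)
  have hψ_cont : Continuous (subDivInv a) := by unfold subDivInv; fun_prop
  have hw_cont : Continuous w :=
    hψ_cont.div (by fun_prop) fun u => (sqrt_pos.2 (by positivity)).ne'
  have hwF : Integrable fun u => w u * F u :=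
    hFi.bdd_mul hw_cont.aestronglyMeasurable (c := 1) (ae_of_all _ fun u => by
      rw [norm_of_nonneg (hw_nonneg u)]
      linarith [hw_sum u, hw_nonneg (-u)])
  have hF_abs : (fun t => F (t - a / t)) = fun t => F (|t| - a / |t|) := by
    ext t
    rcases abs_cases t with ⟨h, -⟩ | ⟨h, -⟩
    · rw [h]
    · rw [h, ← hF, div_neg]
      ring_nf
  rw [hF_abs, integral_comp_abs (f := fun t => F (t - a / t)), setIntegral_Ioi_comp_sub_div ha]
  calc 2 * ∫ u, w u * F u = (∫ u, w u * F u) + ∫ u, w (-u) * F (-u) := by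
        rw [integral_neg_eq_self (fun u => w u * F u)]
        ring
    _ = ∫ u, (w u * F u + w (-u) * F (-u)) := (integral_add hwF hwF.comp_neg).symm
    _ = ∫ u, F u := by
        congr 1 with u
        rw [hF, ← add_mul, hw_sum, one_mul]

lemma integral_exp_neg_sq_div_sq_gaussianReal (ha : 0 < a) :
    ∫ n, exp (-(a ^ 2 / (2 * n ^ 2))) ∂gaussianReal 0 1 = exp (-a) := by
  have hF : ∀ u, gaussianPDFReal 0 1 (-u) = gaussianPDFReal 0 1 u := fun u => by
    simp [gaussianPDFReal]
  have hae : ∀ᵐ n : ℝ, gaussianPDFReal 0 1 n • exp (-(a ^ 2 / (2 * n ^ 2)))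
      = exp (-a) * gaussianPDFReal 0 1 (n - a / n) := by
    filter_upwards [Measure.ae_ne volume 0] with n hn
    simp only [gaussianPDFReal, smul_eq_mul, NNReal.coe_one, sub_zero, mul_one]
    rw [mul_left_comm, mul_assoc, ← exp_add, ← exp_add]
    congr 2
    field_simp
    ring
  rw [integral_gaussianReal_eq_integral_smul one_ne_zero, integral_congr_ae hae, integral_const_mul,
    integral_comp_sub_div_of_even ha hF (integrable_gaussianPDFReal 0 1),
    integral_gaussianPDFReal_eq_one 0 one_ne_zero, mul_one]

end

lemma ProbabilityTheory.IndepFun.measure_le_comp_eq_lintegral {Ω β : Type*} [MeasurableSpace Ω]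
    [MeasurableSpace β] {μ : Measure Ω} [IsFiniteMeasure μ] {X : Ω → ℝ} {Y : Ω → β}
    (hXY : IndepFun X Y μ) (hX : Measurable X) (hY : Measurable Y) {h : β → ℝ}
    (hh : Measurable h) :
    μ {ω | X ω ≤ h (Y ω)} = ∫⁻ y, μ {ω | X ω ≤ h y} ∂(μ.map Y) := by
  have hS : MeasurableSet {p : β × ℝ | p.2 ≤ h p.1} :=
    measurableSet_le measurable_snd (hh.comp measurable_fst)
  calc μ {ω | X ω ≤ h (Y ω)} = μ.map (fun ω => (Y ω, X ω)) {p | p.2 ≤ h p.1} :=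
        (Measure.map_apply (hY.prodMk hX) hS).symm
    _ = ∫⁻ y, μ.map X (Iic (h y)) ∂(μ.map Y) := by
        rw [hXY.symm.map_prod_eq_prod_map_map hY.aemeasurable hX.aemeasurable,
          Measure.prod_apply hS]
        rfl
    _ = ∫⁻ y, μ {ω | X ω ≤ h y} ∂(μ.map Y) := by
        simp_rw [Measure.map_apply hX measurableSet_Iic]
        rfl

lemma lintegral_ofReal_exp_neg_sq_div_sq_gaussianReal {a : ℝ} (ha : 0 < a) :
    ∫⁻ n, ENNReal.ofReal (exp (-(a ^ 2 / (2 * n ^ 2)))) ∂gaussianReal 0 1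
      = ENNReal.ofReal (exp (-a)) := by
  have hint : Integrable (fun n : ℝ => exp (-(a ^ 2 / (2 * n ^ 2)))) (gaussianReal 0 1) :=
    Integrable.of_bound (by fun_prop : Measurable _).aestronglyMeasurable 1 (ae_of_all _ fun n => by
      rw [norm_of_nonneg (exp_pos _).le, exp_le_one_iff, neg_nonpos]
      positivity)
  rw [← ofReal_integral_eq_lintegral_ofReal hint (ae_of_all _ fun _ => (exp_pos _).le),
    integral_exp_neg_sq_div_sq_gaussianReal ha]

lemma exp_neg_two_mul_add_log_abs {n : ℝ} (hn : n ≠ 0) (x : ℝ) :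
    exp (-(2 * (x + log |n|))) = (√2 * exp (-x)) ^ 2 / (2 * n ^ 2) := by
  have hlog_sq : -(2 * (x + log |n|)) = (-x) + (-x) - log (|n| ^ 2) := by
    rw [Real.log_pow]
    push_cast
    ring
  rw [hlog_sq, exp_sub, exp_add, exp_log (by positivity), sq_abs, mul_pow, sq_sqrt zero_le_two]
  field_simp

/-- If `Z` is a standard Gumbel random variable and `Θ = -log|N|` with `N`
standard normal, `Z` and `N` independent, then `Z/2 + Θ` has the same
distribution as `Z + (log 2)/2`. -/
theorem gumbel_half_add_theta_eq_gumbel_shift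
    {Ω : Type*} [MeasurableSpace Ω] (μ : Measure Ω) [IsProbabilityMeasure μ]
    (Z N : Ω → ℝ) (hZmeas : Measurable Z) (hNmeas : Measurable N)
    (hZ : ∀ x : ℝ, μ {ω | Z ω ≤ x} = ENNReal.ofReal (Real.exp (-Real.exp (-x))))
    (hN : μ.map N = gaussianReal 0 1)
    (hindep : IndepFun Z N μ) :
    μ.map (fun ω => Z ω / 2 + (-Real.log |N ω|))
      = μ.map (fun ω => Z ω + Real.log 2 / 2) := by
  refine Measure.ext_of_Iic _ _ fun x => ?_
  rw [Measure.map_apply (by fun_prop) measurableSet_Iic,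
    Measure.map_apply (by fun_prop) measurableSet_Iic]
  have hL : (fun ω => Z ω / 2 + -Real.log |N ω|) ⁻¹' Iic x
      = {ω | Z ω ≤ 2 * (x + Real.log |N ω|)} := by
    ext ω
    simp only [mem_preimage, mem_Iic, mem_ofPred_eq]
    constructor <;> intro <;> linarith
  have hR : (fun ω => Z ω + Real.log 2 / 2) ⁻¹' Iic x = {ω | Z ω ≤ x - Real.log 2 / 2} := by
    ext ω
    simp [le_sub_iff_add_le]
  have hshift : exp (-(x - Real.log 2 / 2)) = √2 * exp (-x) := by
    rw [neg_sub, exp_sub, exp_half, exp_log two_pos, div_eq_mul_inv, ← exp_neg]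
  have : NullSingletonClass (gaussianReal 0 1) := nullSingletonClass_gaussianReal one_ne_zero
  rw [hL, hR, hZ, hshift, ← lintegral_ofReal_exp_neg_sq_div_sq_gaussianReal (by positivity),
    hindep.measure_le_comp_eq_lintegral hZmeas hNmeas (h := fun n => 2 * (x + Real.log |n|))
      (by fun_prop), hN]
  refine lintegral_congr_ae ?_
  filter_upwards [Measure.ae_ne (gaussianReal 0 1) 0] with n hn
  rw [hZ, exp_neg_two_mul_add_log_abs hn]
end

section
/- Residual lifetime convergence for the Gaussian tail: if R(x) = P(N > x) for N standard normal, z = (|x₀|/σ)√(2λ) with λ > 0 and x₀ < 0 fixed, then for every t ∈ ℝ, lim_{σ→0} R(z/√(1 - σ² e^{-2λt})) / R(z) = exp(-x₀² λ e^{-2λ t}). -/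
/-!
Mills' ratio: integrating `v e^{-v²/2}` and `(1 + v⁻²) e^{-v²/2}`, the exact derivatives of
`-e^{-v²/2}` and `-e^{-v²/2}/v`, against `e^{-v²/2}` on `(x, ∞)` squeezes the Gaussian tail
between `x e^{-x²/2}/(1 + x²)` and `e^{-x²/2}/x`, so `P(N > x) ~ φ(x)/x` as `x → ∞`. Hence
`P(N > a)/P(N > z) → e^{-L}` whenever `a, z → ∞` with `z/a → 1` and `(a² - z²)/2 → L`. For
`z = c/σ` and `a = z/√(1 - σ²k)` one has `a² - z² = c²k/(1 - σ²k) → c²k`.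
-/

open MeasureTheory ProbabilityTheory Filter
open Real Set Asymptotics Topology

noncomputable def gaussianTail (x : ℝ) : ℝ := ∫ v in Ioi x, exp (-v ^ 2 / 2)

lemma integrable_exp_neg_sq_div_two : Integrable fun v : ℝ => exp (-v ^ 2 / 2) := by
  convert integrable_exp_neg_mul_sq (b := 1 / 2) (by norm_num) using 3
  ring

lemma integrable_mul_exp_neg_sq_div_two : Integrable fun v : ℝ => v * exp (-v ^ 2 / 2) := by
  convert integrable_mul_exp_neg_mul_sq (b := 1 / 2) (by norm_num) using 4
  ring

lemma hasDerivAt_neg_exp_neg_sq_div_two (v : ℝ) :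
    HasDerivAt (fun v : ℝ => -exp (-v ^ 2 / 2)) (v * exp (-v ^ 2 / 2)) v := by
  have h : HasDerivAt (fun v : ℝ => -v ^ 2 / 2) (-v) v :=
    ((hasDerivAt_pow 2 v).neg.div_const 2).congr_deriv (by ring)
  exact h.exp.neg.congr_deriv (by ring)

lemma hasDerivAt_neg_exp_neg_sq_div_two_div {v : ℝ} (hv : v ≠ 0) :
    HasDerivAt (fun v : ℝ => -exp (-v ^ 2 / 2) / v)
      ((1 + (v ^ 2)⁻¹) * exp (-v ^ 2 / 2)) v := by
  refine ((hasDerivAt_neg_exp_neg_sq_div_two v).div (hasDerivAt_id v) hv).congr_deriv ?_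
  simp only [id]
  field_simp
  ring

lemma tendsto_exp_neg_sq_div_two_atTop :
    Tendsto (fun v : ℝ => exp (-v ^ 2 / 2)) atTop (𝓝 0) := by
  refine tendsto_exp_atBot.comp ?_
  simpa [neg_div] using (tendsto_pow_atTop two_ne_zero).atTop_div_const (two_pos : (0 : ℝ) < 2)

lemma integral_Ioi_mul_exp_neg_sq_div_two (x : ℝ) :
    ∫ v in Ioi x, v * exp (-v ^ 2 / 2) = exp (-x ^ 2 / 2) := by
  simpa using integral_Ioi_of_hasDerivAt_of_tendsto'
    (fun v _ => hasDerivAt_neg_exp_neg_sq_div_two v)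
    integrable_mul_exp_neg_sq_div_two.integrableOn tendsto_exp_neg_sq_div_two_atTop.neg

lemma integral_Ioi_one_add_inv_sq_mul_exp_neg_sq_div_two {x : ℝ} (hx : 0 < x) :
    ∫ v in Ioi x, (1 + (v ^ 2)⁻¹) * exp (-v ^ 2 / 2) = exp (-x ^ 2 / 2) / x := by
  rw [integral_Ioi_of_hasDerivAt_of_nonneg'
    (fun v hv => hasDerivAt_neg_exp_neg_sq_div_two_div (hx.trans_le hv).ne')
    (fun v _ => by positivity)
    (by simpa [neg_div, div_eq_mul_inv] using
      (tendsto_exp_neg_sq_div_two_atTop.mul tendsto_inv_atTop_zero).neg)]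
  ring

lemma mul_gaussianTail_le (x : ℝ) : x * gaussianTail x ≤ exp (-x ^ 2 / 2) := by
  rw [gaussianTail, ← integral_const_mul, ← integral_Ioi_mul_exp_neg_sq_div_two x]
  refine setIntegral_mono_on (integrable_exp_neg_sq_div_two.integrableOn.const_mul x)
    integrable_mul_exp_neg_sq_div_two.integrableOn measurableSet_Ioi fun v hv => ?_
  exact mul_le_mul_of_nonneg_right (le_of_lt hv) (exp_pos _).le

lemma exp_neg_sq_div_two_div_le {x : ℝ} (hx : 0 < x) :
    exp (-x ^ 2 / 2) / x ≤ (1 + (x ^ 2)⁻¹) * gaussianTail x := by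
  rw [gaussianTail, ← integral_const_mul, ← integral_Ioi_one_add_inv_sq_mul_exp_neg_sq_div_two hx]
  refine integral_mono_of_nonneg (ae_of_all _ fun v => by positivity)
    (integrable_exp_neg_sq_div_two.integrableOn.const_mul _) ?_
  filter_upwards [ae_restrict_mem measurableSet_Ioi] with v (hv : x < v)
  gcongr

lemma gaussianTail_isEquivalent_atTop :
    gaussianTail ~[atTop] fun x => exp (-x ^ 2 / 2) / x := by
  refine isEquivalent_of_tendsto_one ?_
  have hlow : Tendsto (fun x : ℝ => (1 + (x ^ 2)⁻¹)⁻¹) atTop (𝓝 1) := by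
    simpa using (((tendsto_inv_atTop_zero (𝕜 := ℝ)).comp
      (tendsto_pow_atTop two_ne_zero)).const_add 1).inv₀ (by norm_num)
  refine tendsto_of_tendsto_of_tendsto_of_le_of_le' hlow tendsto_const_nhds ?_ ?_
  · filter_upwards [eventually_gt_atTop 0] with x hx
    rw [Pi.div_apply, le_div_iff₀ (by positivity), inv_mul_le_iff₀ (by positivity)]
    exact exp_neg_sq_div_two_div_le hx
  · filter_upwards [eventually_gt_atTop 0] with x hx
    rw [Pi.div_apply, div_le_one (by positivity), le_div_iff₀ hx, mul_comm]
    exact mul_gaussianTail_le x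

lemma tendsto_gaussianTail_div_gaussianTail {α : Type*} {l : Filter α} {a z : α → ℝ} {L : ℝ}
    (ha : Tendsto a l atTop) (hz : Tendsto z l atTop) (hza : Tendsto (fun s => z s / a s) l (𝓝 1))
    (hL : Tendsto (fun s => (a s ^ 2 - z s ^ 2) / 2) l (𝓝 L)) :
    Tendsto (fun s => gaussianTail (a s) / gaussianTail (z s)) l (𝓝 (exp (-L))) := by
  refine ((gaussianTail_isEquivalent_atTop.comp_tendsto ha).div
    (gaussianTail_isEquivalent_atTop.comp_tendsto hz)).tendsto_nhds_iff.mpr ?_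
  have hlim : Tendsto (fun s => z s / a s * exp (-((a s ^ 2 - z s ^ 2) / 2))) l
      (𝓝 (exp (-L))) := by
    simpa using hza.mul hL.neg.rexp
  refine hlim.congr' ?_
  filter_upwards [ha.eventually_gt_atTop 0, hz.eventually_gt_atTop 0] with s has hzs
  have hexp : exp (-((a s ^ 2 - z s ^ 2) / 2)) = exp (-a s ^ 2 / 2) / exp (-z s ^ 2 / 2) := by
    rw [← exp_sub]
    ring_nf
  simp only [Function.comp_apply, Pi.div_apply, hexp]
  field_simp

lemma tendsto_gaussianTail_div_rescaled {c : ℝ} (hc : 0 < c) (k : ℝ) :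
    Tendsto (fun σ => gaussianTail (c / σ / √(1 - σ ^ 2 * k)) / gaussianTail (c / σ))
      (𝓝[>] 0) (𝓝 (exp (-(c ^ 2 * k / 2)))) := by
  have hz : Tendsto (fun σ : ℝ => c / σ) (𝓝[>] 0) atTop := by
    simpa [div_eq_mul_inv] using tendsto_inv_nhdsGT_zero.const_mul_atTop hc
  have hε : Tendsto (fun σ : ℝ => 1 - σ ^ 2 * k) (𝓝[>] 0) (𝓝 1) :=
    ((by fun_prop : Continuous fun σ : ℝ => 1 - σ ^ 2 * k).tendsto' 0 1 (by simp)).mono_left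
      nhdsWithin_le_nhds
  have hsqrt : Tendsto (fun σ : ℝ => √(1 - σ ^ 2 * k)) (𝓝[>] 0) (𝓝 1) := by
    simpa using hε.sqrt
  have hev : ∀ᶠ σ in 𝓝[>] (0 : ℝ), 0 < σ ∧ 0 < 1 - σ ^ 2 * k :=
    eventually_mem_nhdsWithin.and (hε.eventually_const_lt one_pos)
  have ha : Tendsto (fun σ : ℝ => c / σ / √(1 - σ ^ 2 * k)) (𝓝[>] 0) atTop := by
    simpa [div_eq_mul_inv] using hz.atTop_mul_pos one_pos (by simpa using hsqrt.inv₀ one_ne_zero)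
  refine tendsto_gaussianTail_div_gaussianTail ha hz (hsqrt.congr' ?_) ?_
  · filter_upwards [hev] with σ ⟨hσ, hk⟩
    field_simp
  · have hlim : Tendsto (fun σ : ℝ => c ^ 2 * k / (1 - σ ^ 2 * k) / 2) (𝓝[>] 0)
        (𝓝 (c ^ 2 * k / 2)) := by
      simpa using (tendsto_const_nhds.div hε one_ne_zero).div_const 2
    refine hlim.congr' ?_
    filter_upwards [hev] with σ ⟨hσ, hk⟩
    have hk' : 1 - k * σ ^ 2 ≠ 0 := by linarith
    rw [div_pow, sq_sqrt hk.le]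
    field_simp
    ring

lemma gaussianReal_Ioi_toReal (x : ℝ) :
    (gaussianReal 0 1 (Ioi x)).toReal = (√(2 * π))⁻¹ * gaussianTail x := by
  rw [gaussianReal_apply_eq_integral 0 one_ne_zero,
    ENNReal.toReal_ofReal (integral_nonneg fun v => gaussianPDFReal_nonneg 0 1 v),
    gaussianTail, ← integral_const_mul]
  congr 1 with v
  simp [gaussianPDFReal]

/-- Residual lifetime convergence for the Gaussian tail: with
`R(x) = P(N > x)` for `N` standard normal and `z = (|x₀|/σ)√(2λ)`,
for every `t ∈ ℝ`,
`lim_{σ→0⁺} R(z/√(1 - σ²e^{-2λt})) / R(z) = exp(-x₀² λ e^{-2λt})`. -/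
theorem gaussian_tail_residual_lifetime
    (R : ℝ → ℝ) (hR : ∀ x, R x = (gaussianReal 0 1 (Set.Ioi x)).toReal)
    (lam x₀ : ℝ) (hlam : 0 < lam) (hx₀ : x₀ < 0) (t : ℝ) :
    Tendsto
      (fun σ : ℝ =>
        R ((|x₀| / σ) * Real.sqrt (2 * lam) / Real.sqrt (1 - σ ^ 2 * Real.exp (-2 * lam * t)))
          / R ((|x₀| / σ) * Real.sqrt (2 * lam)))
      (nhdsWithin 0 (Set.Ioi 0))
      (nhds (Real.exp (-(x₀ ^ 2) * lam * Real.exp (-2 * lam * t)))) := by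
  have hc : 0 < |x₀| * √(2 * lam) := by
    have hx₀_abs : 0 < |x₀| := abs_pos.mpr hx₀.ne
    positivity
  have hlimit : -((|x₀| * √(2 * lam)) ^ 2 * exp (-2 * lam * t) / 2)
      = -(x₀ ^ 2) * lam * exp (-2 * lam * t) := by
    rw [mul_pow, sq_abs, sq_sqrt (by positivity)]
    ring
  rw [← hlimit]
  refine (tendsto_gaussianTail_div_rescaled hc _).congr fun σ => ?_
  simp only [hR, gaussianReal_Ioi_toReal, div_mul_eq_mul_div]
  exact (mul_div_mul_left _ _ (by positivity : (√(2 * π))⁻¹ ≠ 0)).symm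
end
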